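/- Peskun ordering of power mean reversiblizations: Let L ∈ ℒ⁺ and p, q ∈ ℝ ∪ {−∞, +∞} with p < q. Then P_q(x,y) ≥ P_p(x,y) for all x ≠ y, and equality holds for all x ≠ y if and only if L ∈ ℒ(π). Consequently, ⟨−P_q f, f⟩_π ≥ ⟨−P_p f, f⟩_π for every f : 𝒳 → ℝ, and λ₂(P_p, π) ≤ λ₂(P_q, π). -/

import Mathlib

open Finset

noncomputable section

variable {X : Type*} [Fintype X] [DecidableEq X]

/-- Build a matrix with prescribed off-diagonal entries and diagonal entries
chosen so that every row sums to zero. -/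
def rowZero (F : X → X → ℝ) : X → X → ℝ :=
  fun x y => if x = y then -(∑ z ∈ Finset.univ.erase x, F x z) else F x y

/-- `L` is a Markov infinitesimal generator: nonnegative off-diagonal entries
and zero row sums. -/
def IsGen (L : X → X → ℝ) : Prop :=
  (∀ x y, x ≠ y → 0 ≤ L x y) ∧ (∀ x, ∑ y, L x y = 0)

/-- `L` is a `π`-reversible Markov generator, i.e. `L ∈ ℒ(π)`. -/
def IsRev (π : X → ℝ) (L : X → X → ℝ) : Prop :=
  IsGen L ∧ ∀ x y, π x * L x y = π y * L y x

/-- `π` is a probability distribution with full support. -/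
def IsProb (π : X → ℝ) : Prop := (∀ x, 0 < π x) ∧ ∑ x, π x = 1

/-- The `π`-dual `L_π` of `L`: off-diagonal entries `π(y)L(y,x)/π(x)`,
diagonal entries make row sums zero. -/
def dual (π : X → ℝ) (L : X → X → ℝ) : X → X → ℝ :=
  rowZero (fun x y => π y * L y x / π x)

/-- The `f`-divergence between generators: `Df f π M L = D_f(M‖L)`.
(The convention `0·f(a/0) = 0` holds automatically since `a/0 = 0` and
the factor `L x y = 0` kills the term.) -/
def Df (f : ℝ → ℝ) (π : X → ℝ) (M L : X → X → ℝ) : ℝ :=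
  ∑ x, π x * ∑ y ∈ Finset.univ.erase x, L x y * f (M x y / L x y)

/-- The power mean reversiblization `P_p(L)` with extended-real index
`p ∈ ℝ ∪ {−∞, +∞}`: `P_∞` takes the max, `P_{−∞}` the min, `P_0` the
geometric mean, and otherwise the power mean of `L(x,y)` and `L_π(x,y)`;
diagonal entries make row sums zero. -/
def pmeanE (p : EReal) (π : X → ℝ) (L : X → X → ℝ) : X → X → ℝ :=
  rowZero (fun x y =>
    if p = ⊤ then max (L x y) (dual π L x y)
    else if p = ⊥ then min (L x y) (dual π L x y)
    else if p = 0 then Real.sqrt (L x y * dual π L x y)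
    else ((L x y ^ p.toReal + dual π L x y ^ p.toReal) / 2) ^ (1 / p.toReal))

/-- The Dirichlet form `⟨−Mf, f⟩_π = ∑_x π(x)(−(Mf)(x))f(x)`. -/
def quadForm (π : X → ℝ) (M : X → X → ℝ) (f : X → ℝ) : ℝ :=
  ∑ x, π x * (-(∑ y, M x y * f y)) * f x

/-- The spectral gap
`λ₂(M,π) = inf{⟨−Mf,f⟩_π : π(f) = 0, π(f²) = 1}`. -/
def gap (π : X → ℝ) (M : X → X → ℝ) : ℝ :=
  sInf {r : ℝ | ∃ f : X → ℝ,
    (∑ x, π x * f x = 0) ∧ (∑ x, π x * f x ^ 2 = 1) ∧ r = quadForm π M f}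


section PMLib



/-- power mean of two numbers, real index -/
def PM (r a b : ℝ) : ℝ := ((a ^ r + b ^ r) / 2) ^ (1 / r)

lemma PM_comm (r a b : ℝ) : PM r a b = PM r b a := by rw [PM, PM, add_comm]

lemma PM_self {r a : ℝ} (hr : r ≠ 0) (ha : 0 < a) : PM r a a = a := by
  rw [PM]
  have : (a ^ r + a ^ r) / 2 = a ^ r := by ring
  rw [this, ← Real.rpow_mul ha.le, mul_one_div, div_self hr, Real.rpow_one]

lemma PM_pos {r a b : ℝ} (ha : 0 < a) (hb : 0 < b) : 0 < PM r a b :=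
  Real.rpow_pos_of_pos (by positivity) _

lemma PM_strict_pos {p q a b : ℝ} (hp : 0 < p) (hpq : p < q)
    (ha : 0 < a) (hb : 0 < b) (hab : a ≠ b) : PM p a b < PM q a b := by
  have hq : 0 < q := hp.trans hpq
  set A := a ^ p with hA
  set B := b ^ p with hB
  have hApos : 0 < A := Real.rpow_pos_of_pos ha _
  have hBpos : 0 < B := Real.rpow_pos_of_pos hb _
  have hABne : A ≠ B := by
    intro h
    apply hab
    rcases lt_trichotomy a b with h' | h' | h'
    · exact absurd h (ne_of_lt (Real.rpow_lt_rpow ha.le h' hp))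
    · exact h'
    · exact absurd h.symm (ne_of_lt (Real.rpow_lt_rpow hb.le h' hp))
  set r := q / p with hr
  have hr1 : 1 < r := (one_lt_div hp).mpr hpq
  have hconv := (strictConvexOn_rpow hr1).2 (Set.mem_Ici.mpr hApos.le)
    (Set.mem_Ici.mpr hBpos.le) hABne (by norm_num : (0:ℝ) < 1/2)
    (by norm_num : (0:ℝ) < 1/2) (by norm_num)
  simp only [smul_eq_mul] at hconv
  have h1 : (1/2 : ℝ) * A + (1/2) * B = (A + B) / 2 := by ring
  have h2 : (1/2 : ℝ) * A ^ r + (1/2) * B ^ r = (A ^ r + B ^ r) / 2 := by ring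
  rw [h1, h2] at hconv
  -- hconv : ((A+B)/2) ^ r < (A^r + B^r)/2
  have haq : a ^ q = A ^ r := by
    rw [hA, ← Real.rpow_mul ha.le, mul_div_cancel₀ _ hp.ne']
  have hbq : b ^ q = B ^ r := by
    rw [hB, ← Real.rpow_mul hb.le, mul_div_cancel₀ _ hp.ne']
  have key : (((A + B) / 2) ^ r) ^ (1/q) < ((A ^ r + B ^ r) / 2) ^ (1/q) :=
    Real.rpow_lt_rpow (by positivity) hconv (by positivity)
  have hL : (((A + B) / 2) ^ r) ^ (1/q) = PM p a b := by
    rw [← Real.rpow_mul (by positivity), PM]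
    congr 1
    field_simp [hr]
    rw [hr, div_mul_cancel₀ _ hp.ne']
  have hR : ((A ^ r + B ^ r) / 2) ^ (1/q) = PM q a b := by
    rw [PM, haq, hbq]
  rw [hL, hR] at key
  exact key

lemma sqrt_lt_PM {q a b : ℝ} (hq : 0 < q) (ha : 0 < a) (hb : 0 < b)
    (hab : a ≠ b) : Real.sqrt (a * b) < PM q a b := by
  set A := a ^ q with hA
  set B := b ^ q with hB
  have hApos : 0 < A := Real.rpow_pos_of_pos ha _
  have hBpos : 0 < B := Real.rpow_pos_of_pos hb _
  have hABne : A ≠ B := by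
    intro h
    apply hab
    rcases lt_trichotomy a b with h' | h' | h'
    · exact absurd h (ne_of_lt (Real.rpow_lt_rpow ha.le h' hq))
    · exact h'
    · exact absurd h.symm (ne_of_lt (Real.rpow_lt_rpow hb.le h' hq))
  have hAMGM : Real.sqrt (A * B) < (A + B) / 2 := by
    have hs : Real.sqrt A ≠ Real.sqrt B := fun h => hABne
      ((Real.sqrt_inj hApos.le hBpos.le).mp h)
    have h0 : 0 < (Real.sqrt A - Real.sqrt B) ^ 2 :=
      sq_pos_of_ne_zero (sub_ne_zero.mpr hs)
    have : Real.sqrt A ^ 2 = A := Real.sq_sqrt hApos.le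
    have hB2 : Real.sqrt B ^ 2 = B := Real.sq_sqrt hBpos.le
    have hm : Real.sqrt (A * B) = Real.sqrt A * Real.sqrt B := Real.sqrt_mul hApos.le _
    nlinarith [Real.sqrt_nonneg A, Real.sqrt_nonneg B]
  have key : (Real.sqrt (A * B)) ^ (1/q) < ((A + B) / 2) ^ (1/q) :=
    Real.rpow_lt_rpow (Real.sqrt_nonneg _) hAMGM (by positivity)
  have hL : (Real.sqrt (A * B)) ^ (1/q) = Real.sqrt (a * b) := by
    have hABmul : A * B = (a * b) ^ q := by
      rw [hA, hB, Real.mul_rpow ha.le hb.le]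
    rw [hABmul, Real.sqrt_eq_rpow, Real.sqrt_eq_rpow,
      ← Real.rpow_mul (by positivity), ← Real.rpow_mul (by positivity)]
    ring_nf
    rw [mul_inv_cancel₀ hq.ne', one_mul]
  rw [hL] at key
  exact key

lemma PM_neg_eq {p a b : ℝ} (hp : p ≠ 0) (ha : 0 < a) (hb : 0 < b) :
    PM (-p) a b = (PM p a⁻¹ b⁻¹)⁻¹ := by
  have h1 : a⁻¹ ^ p = a ^ (-p) := by
    rw [← Real.rpow_neg_one a, ← Real.rpow_mul ha.le]; ring_nf
  have h2 : b⁻¹ ^ p = b ^ (-p) := by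
    rw [← Real.rpow_neg_one b, ← Real.rpow_mul hb.le]; ring_nf
  rw [PM, PM, h1, h2]
  rw [show (1 / (-p)) = -(1/p) by ring, Real.rpow_neg (by positivity)]

lemma min_lt_PM_pos {p a b : ℝ} (hp : 0 < p) (ha : 0 < a) (hb : 0 < b)
    (hab : a ≠ b) : min a b < PM p a b := by
  have hmin : 0 < min a b := lt_min ha hb
  have key : min a b ^ p < (a ^ p + b ^ p) / 2 := by
    rcases lt_or_gt_of_ne hab with h | h
    · have e1 : min a b = a := min_eq_left h.le
      have : a ^ p < b ^ p := Real.rpow_lt_rpow ha.le h hp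
      rw [e1]; linarith
    · have e1 : min a b = b := min_eq_right h.le
      have : b ^ p < a ^ p := Real.rpow_lt_rpow hb.le h hp
      rw [e1]; linarith
  calc min a b = (min a b ^ p) ^ (1/p) := by
        rw [← Real.rpow_mul hmin.le, mul_one_div, div_self hp.ne', Real.rpow_one]
    _ < ((a ^ p + b ^ p) / 2) ^ (1/p) :=
        Real.rpow_lt_rpow (by positivity) key (by positivity)

lemma PM_lt_max_pos {p a b : ℝ} (hp : 0 < p) (ha : 0 < a) (hb : 0 < b)
    (hab : a ≠ b) : PM p a b < max a b := by
  have hmax : 0 < max a b := lt_max_of_lt_left ha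
  have key : (a ^ p + b ^ p) / 2 < max a b ^ p := by
    rcases lt_or_gt_of_ne hab with h | h
    · have e1 : max a b = b := max_eq_right h.le
      have : a ^ p < b ^ p := Real.rpow_lt_rpow ha.le h hp
      rw [e1]; linarith
    · have e1 : max a b = a := max_eq_left h.le
      have : b ^ p < a ^ p := Real.rpow_lt_rpow hb.le h hp
      rw [e1]; linarith
  calc PM p a b < (max a b ^ p) ^ (1/p) :=
        Real.rpow_lt_rpow (by positivity) key (by positivity)
    _ = max a b := by
        rw [← Real.rpow_mul hmax.le, mul_one_div, div_self hp.ne', Real.rpow_one]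

lemma inv_min' {a b : ℝ} (ha : 0 < a) (hb : 0 < b) :
    (min a b)⁻¹ = max a⁻¹ b⁻¹ := by
  rcases le_total a b with h | h
  · rw [min_eq_left h, max_eq_left (by gcongr)]
  · rw [min_eq_right h, max_eq_right (by gcongr)]

lemma inv_max' {a b : ℝ} (ha : 0 < a) (hb : 0 < b) :
    (max a b)⁻¹ = min a⁻¹ b⁻¹ := by
  rcases le_total a b with h | h
  · rw [max_eq_right h, min_eq_right (by gcongr)]
  · rw [max_eq_left h, min_eq_left (by gcongr)]

lemma PM_lt_sqrt {p a b : ℝ} (hp : p < 0) (ha : 0 < a) (hb : 0 < b)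
    (hab : a ≠ b) : PM p a b < Real.sqrt (a * b) := by
  have ha' : 0 < a⁻¹ := by positivity
  have hb' : 0 < b⁻¹ := by positivity
  have hab' : a⁻¹ ≠ b⁻¹ := fun h => hab (inv_inj.mp h)
  have e1 : PM p a b = (PM (-p) a⁻¹ b⁻¹)⁻¹ := by
    have := PM_neg_eq (p := -p) (by linarith) ha hb
    simpa using this
  have h2 : Real.sqrt (a⁻¹ * b⁻¹) < PM (-p) a⁻¹ b⁻¹ :=
    sqrt_lt_PM (by linarith) ha' hb' hab'
  have e2 : Real.sqrt (a⁻¹ * b⁻¹) = (Real.sqrt (a * b))⁻¹ := by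
    rw [← mul_inv, Real.sqrt_inv]
  rw [e1]
  have hsq : 0 < Real.sqrt (a⁻¹ * b⁻¹) := Real.sqrt_pos.mpr (by positivity)
  calc (PM (-p) a⁻¹ b⁻¹)⁻¹ < (Real.sqrt (a⁻¹ * b⁻¹))⁻¹ := by
        exact inv_strictAnti₀ hsq h2
    _ = Real.sqrt (a * b) := by rw [e2, inv_inv]

lemma PM_strict {p q a b : ℝ} (hp : p ≠ 0) (hq : q ≠ 0) (hpq : p < q)
    (ha : 0 < a) (hb : 0 < b) (hab : a ≠ b) : PM p a b < PM q a b := by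
  have ha' : 0 < a⁻¹ := by positivity
  have hb' : 0 < b⁻¹ := by positivity
  have hab' : a⁻¹ ≠ b⁻¹ := fun h => hab (inv_inj.mp h)
  rcases lt_trichotomy p 0 with hp0 | rfl | hp0
  · rcases lt_trichotomy q 0 with hq0 | rfl | hq0
    · have key : PM (-q) a⁻¹ b⁻¹ < PM (-p) a⁻¹ b⁻¹ :=
        PM_strict_pos (by linarith) (by linarith) ha' hb' hab'
      have e1 : PM p a b = (PM (-p) a⁻¹ b⁻¹)⁻¹ := by
        have := PM_neg_eq (p := -p) (by linarith) ha hb; simpa using this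
      have e2 : PM q a b = (PM (-q) a⁻¹ b⁻¹)⁻¹ := by
        have := PM_neg_eq (p := -q) (by linarith) ha hb; simpa using this
      rw [e1, e2]
      exact inv_strictAnti₀ (PM_pos ha' hb') key
    · exact absurd rfl hq
    · exact (PM_lt_sqrt hp0 ha hb hab).trans (sqrt_lt_PM hq0 ha hb hab)
  · exact absurd rfl hp
  · exact PM_strict_pos hp0 hpq ha hb hab

lemma min_lt_PM {r a b : ℝ} (hr : r ≠ 0) (ha : 0 < a) (hb : 0 < b)
    (hab : a ≠ b) : min a b < PM r a b := by
  rcases lt_trichotomy r 0 with hr0 | rfl | hr0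
  · have ha' : 0 < a⁻¹ := by positivity
    have hb' : 0 < b⁻¹ := by positivity
    have hab' : a⁻¹ ≠ b⁻¹ := fun h => hab (inv_inj.mp h)
    have e1 : PM r a b = (PM (-r) a⁻¹ b⁻¹)⁻¹ := by
      have := PM_neg_eq (p := -r) (by linarith) ha hb; simpa using this
    have key : PM (-r) a⁻¹ b⁻¹ < max a⁻¹ b⁻¹ :=
      PM_lt_max_pos (by linarith) ha' hb' hab'
    rw [e1]
    rw [← inv_min' ha hb] at key
    calc min a b = ((min a b)⁻¹)⁻¹ := (inv_inv _).symm
      _ < (PM (-r) a⁻¹ b⁻¹)⁻¹ := inv_strictAnti₀ (PM_pos ha' hb') key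
  · exact absurd rfl hr
  · exact min_lt_PM_pos hr0 ha hb hab

lemma PM_lt_max {r a b : ℝ} (hr : r ≠ 0) (ha : 0 < a) (hb : 0 < b)
    (hab : a ≠ b) : PM r a b < max a b := by
  rcases lt_trichotomy r 0 with hr0 | rfl | hr0
  · have ha' : 0 < a⁻¹ := by positivity
    have hb' : 0 < b⁻¹ := by positivity
    have hab' : a⁻¹ ≠ b⁻¹ := fun h => hab (inv_inj.mp h)
    have e1 : PM r a b = (PM (-r) a⁻¹ b⁻¹)⁻¹ := by
      have := PM_neg_eq (p := -r) (by linarith) ha hb; simpa using this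
    have key : min a⁻¹ b⁻¹ < PM (-r) a⁻¹ b⁻¹ :=
      min_lt_PM_pos (by linarith) ha' hb' hab'
    rw [e1]
    rw [← inv_max' ha hb] at key
    calc (PM (-r) a⁻¹ b⁻¹)⁻¹ < ((max a b)⁻¹)⁻¹ :=
          inv_strictAnti₀ (inv_pos.mpr (lt_max_of_lt_left ha)) key
      _ = max a b := inv_inv _
  · exact absurd rfl hr
  · exact PM_lt_max_pos hr0 ha hb hab

lemma min_lt_sqrt {a b : ℝ} (ha : 0 < a) (hb : 0 < b) (hab : a ≠ b) :
    min a b < Real.sqrt (a * b) := by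
  have hmin : 0 < min a b := lt_min ha hb
  have : min a b * min a b < a * b := by
    rcases lt_or_gt_of_ne hab with h | h
    · rw [min_eq_left h.le]; nlinarith
    · rw [min_eq_right h.le]; nlinarith
  calc min a b = Real.sqrt (min a b * min a b) := (Real.sqrt_mul_self hmin.le).symm
    _ < Real.sqrt (a * b) := Real.sqrt_lt_sqrt (by positivity) this

lemma sqrt_lt_max {a b : ℝ} (ha : 0 < a) (hb : 0 < b) (hab : a ≠ b) :
    Real.sqrt (a * b) < max a b := by
  have hmax : 0 < max a b := lt_max_of_lt_left ha
  have : a * b < max a b * max a b := by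
    rcases lt_or_gt_of_ne hab with h | h
    · rw [max_eq_right h.le]; nlinarith
    · rw [max_eq_left h.le]; nlinarith
  calc Real.sqrt (a * b) < Real.sqrt (max a b * max a b) :=
        Real.sqrt_lt_sqrt (by positivity) this
    _ = max a b := Real.sqrt_mul_self hmax.le

/-- power mean of two numbers, EReal index, mirroring `pmeanE`. -/
def pm (p : EReal) (a b : ℝ) : ℝ :=
  if p = ⊤ then max a b
  else if p = ⊥ then min a b
  else if p = 0 then Real.sqrt (a * b)
  else ((a ^ p.toReal + b ^ p.toReal) / 2) ^ (1 / p.toReal)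

lemma pm_top (a b : ℝ) : pm ⊤ a b = max a b := by simp [pm]

lemma pm_bot (a b : ℝ) : pm ⊥ a b = min a b := by simp [pm]

lemma pm_zero (a b : ℝ) : pm 0 a b = Real.sqrt (a * b) := by simp [pm]

lemma pm_coe_toReal {p : EReal} (hpt : p ≠ ⊤) (hpb : p ≠ ⊥) (hp0 : p ≠ 0)
    {a b : ℝ} : pm p a b = PM p.toReal a b := by
  simp [pm, hpt, hpb, hp0, PM]

lemma toReal_ne_zero' {p : EReal} (hpt : p ≠ ⊤) (hpb : p ≠ ⊥) (hp0 : p ≠ 0) :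
    p.toReal ≠ 0 := by
  intro h
  apply hp0
  have := EReal.coe_toReal hpt hpb
  rw [h] at this
  exact_mod_cast this.symm

lemma pm_strict {a b : ℝ} (ha : 0 < a) (hb : 0 < b) (hab : a ≠ b)
    {p q : EReal} (hpq : p < q) : pm p a b < pm q a b := by
  induction p using EReal.rec with
  | top => exact absurd hpq (by simp)
  | bot =>
    rw [pm_bot]
    induction q using EReal.rec with
    | bot => exact absurd hpq (lt_irrefl _)
    | top => rw [pm_top]; exact min_lt_max.mpr hab
    | coe s =>
      by_cases hs : (s : EReal) = 0
      · rw [hs, pm_zero]; exact min_lt_sqrt ha hb hab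
      · rw [pm_coe_toReal (EReal.coe_ne_top s) (EReal.coe_ne_bot s) hs]
        exact min_lt_PM (toReal_ne_zero' (EReal.coe_ne_top s) (EReal.coe_ne_bot s) hs) ha hb hab
  | coe r =>
    induction q using EReal.rec with
    | bot => exact absurd hpq (by exact (EReal.bot_lt_coe r).asymm)
    | top =>
      rw [pm_top]
      by_cases hr : (r : EReal) = 0
      · rw [hr, pm_zero]; exact sqrt_lt_max ha hb hab
      · rw [pm_coe_toReal (EReal.coe_ne_top r) (EReal.coe_ne_bot r) hr]
        exact PM_lt_max (toReal_ne_zero' (EReal.coe_ne_top r) (EReal.coe_ne_bot r) hr) ha hb hab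
    | coe s =>
      have hrs : r < s := EReal.coe_lt_coe_iff.mp hpq
      by_cases hr : (r : EReal) = 0
      · have hr' : r = 0 := by exact_mod_cast hr
        have hs : (s : EReal) ≠ 0 := by
          simp only [ne_eq, EReal.coe_eq_zero]; linarith
        rw [hr, pm_zero, pm_coe_toReal (EReal.coe_ne_top s) (EReal.coe_ne_bot s) hs,
          EReal.toReal_coe]
        exact sqrt_lt_PM (by linarith) ha hb hab
      · by_cases hs : (s : EReal) = 0
        · have hs' : s = 0 := by exact_mod_cast hs
          have hr' : r < 0 := by
            have : r ≠ 0 := by exact_mod_cast hr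
            rcases this.lt_or_gt with h | h
            · exact h
            · linarith
          rw [hs, pm_zero, pm_coe_toReal (EReal.coe_ne_top r) (EReal.coe_ne_bot r) hr,
            EReal.toReal_coe]
          exact PM_lt_sqrt hr' ha hb hab
        · rw [pm_coe_toReal (EReal.coe_ne_top r) (EReal.coe_ne_bot r) hr,
            pm_coe_toReal (EReal.coe_ne_top s) (EReal.coe_ne_bot s) hs,
            EReal.toReal_coe, EReal.toReal_coe]
          exact PM_strict (by exact_mod_cast hr) (by exact_mod_cast hs) hrs ha hb hab

lemma pm_self {a : ℝ} (ha : 0 < a) (p : EReal) : pm p a a = a := by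
  by_cases ht : p = ⊤
  · rw [ht, pm_top, max_self]
  by_cases hb : p = ⊥
  · rw [hb, pm_bot, min_self]
  by_cases h0 : p = 0
  · rw [h0, pm_zero, Real.sqrt_mul_self ha.le]
  · rw [pm_coe_toReal ht hb h0]
    exact PM_self (toReal_ne_zero' ht hb h0) ha

lemma pm_le {a b : ℝ} (ha : 0 < a) (hb : 0 < b) {p q : EReal} (hpq : p < q) :
    pm p a b ≤ pm q a b := by
  rcases eq_or_ne a b with rfl | hab
  · rw [pm_self ha, pm_self ha]
  · exact (pm_strict ha hb hab hpq).le

lemma pm_comm (p : EReal) (a b : ℝ) : pm p a b = pm p b a := by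
  simp only [pm, max_comm, min_comm, mul_comm, add_comm]

lemma mul_max' {t a b : ℝ} (ht : 0 ≤ t) : max (t * a) (t * b) = t * max a b := by
  rcases le_total a b with h | h
  · rw [max_eq_right h, max_eq_right (by exact mul_le_mul_of_nonneg_left h ht)]
  · rw [max_eq_left h, max_eq_left (by exact mul_le_mul_of_nonneg_left h ht)]

lemma mul_min' {t a b : ℝ} (ht : 0 ≤ t) : min (t * a) (t * b) = t * min a b := by
  rcases le_total a b with h | h
  · rw [min_eq_left h, min_eq_left (by exact mul_le_mul_of_nonneg_left h ht)]
  · rw [min_eq_right h, min_eq_right (by exact mul_le_mul_of_nonneg_left h ht)]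

lemma PM_hom {r t a b : ℝ} (hr : r ≠ 0) (ht : 0 < t) (ha : 0 < a) (hb : 0 < b) :
    PM r (t * a) (t * b) = t * PM r a b := by
  rw [PM, PM, Real.mul_rpow ht.le ha.le, Real.mul_rpow ht.le hb.le]
  have h1 : (t ^ r * a ^ r + t ^ r * b ^ r) / 2 = t ^ r * ((a ^ r + b ^ r) / 2) := by
    ring
  rw [h1, Real.mul_rpow (by positivity) (by positivity),
    ← Real.rpow_mul ht.le, mul_one_div, div_self hr, Real.rpow_one]

lemma pm_hom (p : EReal) {t a b : ℝ} (ht : 0 < t) (ha : 0 < a) (hb : 0 < b) :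
    pm p (t * a) (t * b) = t * pm p a b := by
  by_cases htp : p = ⊤
  · rw [htp, pm_top, pm_top, mul_max' ht.le]
  by_cases hbp : p = ⊥
  · rw [hbp, pm_bot, pm_bot, mul_min' ht.le]
  by_cases h0 : p = 0
  · rw [h0, pm_zero, pm_zero, show t * a * (t * b) = t ^ 2 * (a * b) by ring,
      Real.sqrt_mul (by positivity), Real.sqrt_sq ht.le]
  · rw [pm_coe_toReal htp hbp h0, pm_coe_toReal htp hbp h0]
    exact PM_hom (toReal_ne_zero' htp hbp h0) ht ha hb

lemma pm_pos {a b : ℝ} (ha : 0 < a) (hb : 0 < b) (p : EReal) : 0 < pm p a b := by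
  by_cases htp : p = ⊤
  · rw [htp, pm_top]; exact lt_max_of_lt_left ha
  by_cases hbp : p = ⊥
  · rw [hbp, pm_bot]; exact lt_min ha hb
  by_cases h0 : p = 0
  · rw [h0, pm_zero]; exact Real.sqrt_pos.mpr (by positivity)
  · rw [pm_coe_toReal htp hbp h0]; exact PM_pos ha hb

end PMLib

section MatrixAux

variable {X : Type*} [Fintype X] [DecidableEq X]

lemma rowZero_off {F : X → X → ℝ} {x y : X} (h : x ≠ y) : rowZero F x y = F x y :=
  if_neg h

lemma rowZero_rowsum (F : X → X → ℝ) (x : X) : ∑ y, rowZero F x y = 0 := by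
  rw [← Finset.add_sum_erase _ _ (Finset.mem_univ x)]
  have h1 : rowZero F x x = -(∑ z ∈ Finset.univ.erase x, F x z) := if_pos rfl
  have h2 : ∀ z ∈ Finset.univ.erase x, rowZero F x z = F x z := fun z hz =>
    if_neg (fun h => (Finset.ne_of_mem_erase hz) h.symm)
  rw [h1, Finset.sum_congr rfl h2]
  ring

lemma dual_off (π : X → ℝ) (L : X → X → ℝ) {x y : X} (h : x ≠ y) :
    dual π L x y = π y * L y x / π x := rowZero_off h

lemma pmeanE_off (p : EReal) (π : X → ℝ) (L : X → X → ℝ) {x y : X} (h : x ≠ y) :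
    pmeanE p π L x y = pm p (L x y) (dual π L x y) := by
  rw [pmeanE, rowZero_off h]; rfl

lemma pmeanE_rowsum (p : EReal) (π : X → ℝ) (L : X → X → ℝ) (x : X) :
    ∑ y, pmeanE p π L x y = 0 := rowZero_rowsum _ x

lemma dual_pos {π : X → ℝ} (hπ : ∀ x, 0 < π x) {L : X → X → ℝ}
    (hLpos : ∀ x y, x ≠ y → 0 < L x y) {x y : X} (h : x ≠ y) :
    0 < dual π L x y := by
  rw [dual_off π L h]
  have h1 := hLpos y x h.symm
  have h2 := hπ x
  have h3 := hπ y
  positivity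

lemma pmean_sym {π : X → ℝ} (hπ : ∀ x, 0 < π x) {L : X → X → ℝ}
    (hLpos : ∀ x y, x ≠ y → 0 < L x y) (r : EReal) (x y : X) :
    π x * pmeanE r π L x y = π y * pmeanE r π L y x := by
  rcases eq_or_ne x y with rfl | hxy
  · rfl
  · rw [pmeanE_off r π L hxy, pmeanE_off r π L hxy.symm,
      dual_off π L hxy, dual_off π L hxy.symm]
    have hx := hπ x
    have hy := hπ y
    have hxy1 := hLpos x y hxy
    have hyx1 := hLpos y x hxy.symm
    have e1 : π x * pm r (L x y) (π y * L y x / π x)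
        = pm r (π x * L x y) (π y * L y x) := by
      rw [← pm_hom r hx hxy1 (by positivity)]
      congr 1
      field_simp
    have e2 : π y * pm r (L y x) (π x * L x y / π y)
        = pm r (π y * L y x) (π x * L x y) := by
      rw [← pm_hom r hy hyx1 (by positivity)]
      congr 1
      field_simp
    rw [e1, e2, pm_comm]

lemma quadForm_eq (π : X → ℝ) (M : X → X → ℝ) (f : X → ℝ) :
    quadForm π M f = ∑ x, ∑ y, -(π x * M x y * f y * f x) := by
  rw [quadForm]
  refine Finset.sum_congr rfl fun x _ => ?_
  calc π x * (-(∑ y, M x y * f y)) * f x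
      = (∑ y, M x y * f y) * (-(π x * f x)) := by ring
    _ = ∑ y, M x y * f y * (-(π x * f x)) := Finset.sum_mul _ _ _
    _ = ∑ y, -(π x * M x y * f y * f x) := Finset.sum_congr rfl fun y _ => by ring

lemma quad_diff (π : X → ℝ) (M M' : X → X → ℝ)
    (hrow : ∀ x, ∑ y, M x y = 0) (hrow' : ∀ x, ∑ y, M' x y = 0)
    (hsym : ∀ x y, π x * (M x y - M' x y) = π y * (M y x - M' y x)) (f : X → ℝ) :
    quadForm π M f - quadForm π M' f
      = (1/2) * ∑ x, ∑ y, (π x * (M x y - M' x y)) * (f x - f y)^2 := by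
  set D : X → X → ℝ := fun x y => π x * (M x y - M' x y) with hD
  have hrowD : ∀ x, ∑ y, D x y = 0 := by
    intro x
    simp only [hD]
    rw [← Finset.mul_sum, Finset.sum_sub_distrib, hrow, hrow']
    ring
  have hA : ∀ g : X → ℝ, ∑ x, ∑ y, D x y * g x = 0 := by
    intro g
    refine Finset.sum_eq_zero fun x _ => ?_
    rw [← Finset.sum_mul, hrowD, zero_mul]
  have hC : ∑ x, ∑ y, D x y * f y ^ 2 = 0 := by
    rw [Finset.sum_comm]
    calc ∑ y, ∑ x, D x y * f y ^ 2 = ∑ y, ∑ x, D y x * f y ^ 2 := by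
          refine Finset.sum_congr rfl fun y _ => Finset.sum_congr rfl fun x _ => ?_
          have : D x y = D y x := hsym x y
          rw [this]
      _ = 0 := hA (fun y => f y ^ 2)
  have hB : quadForm π M f - quadForm π M' f = -∑ x, ∑ y, D x y * (f x * f y) := by
    rw [quadForm_eq, quadForm_eq, ← Finset.sum_sub_distrib, ← Finset.sum_neg_distrib]
    refine Finset.sum_congr rfl fun x _ => ?_
    rw [← Finset.sum_sub_distrib, ← Finset.sum_neg_distrib]
    refine Finset.sum_congr rfl fun y _ => ?_
    simp only [hD]
    ring
  have hExp : ∑ x, ∑ y, D x y * (f x - f y)^2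
      = (∑ x, ∑ y, D x y * f x ^ 2) - 2 * (∑ x, ∑ y, D x y * (f x * f y))
        + (∑ x, ∑ y, D x y * f y ^ 2) := by
    rw [Finset.mul_sum, ← Finset.sum_sub_distrib, ← Finset.sum_add_distrib]
    refine Finset.sum_congr rfl fun x _ => ?_
    rw [Finset.mul_sum, ← Finset.sum_sub_distrib, ← Finset.sum_add_distrib]
    refine Finset.sum_congr rfl fun y _ => ?_
    ring
  rw [hB, hExp, hA (fun x => f x ^ 2), hC]
  ring

end MatrixAux

/-- **Peskun ordering of power mean reversiblizations** (Theorem 3.12):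
for `L ∈ ℒ⁺` and `p < q` in `ℝ ∪ {±∞}`, `P_q ⪰ P_p` off-diagonally (with
equality everywhere iff `L ∈ ℒ(π)`), hence `⟨−P_q f, f⟩_π ≥ ⟨−P_p f, f⟩_π`
for all `f` and `λ₂(P_p, π) ≤ λ₂(P_q, π)`. -/
theorem peskun_power_means (hcard : 1 < Fintype.card X)
    (π : X → ℝ) (hπ : IsProb π)
    (L : X → X → ℝ) (hL : IsGen L) (hLpos : ∀ x y, x ≠ y → 0 < L x y)
    (p q : EReal) (hpq : p < q) :
    (∀ x y, x ≠ y → pmeanE p π L x y ≤ pmeanE q π L x y) ∧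
    ((∀ x y, x ≠ y → pmeanE p π L x y = pmeanE q π L x y) ↔ IsRev π L) ∧
    (∀ f : X → ℝ, quadForm π (pmeanE p π L) f ≤ quadForm π (pmeanE q π L) f) ∧
    gap π (pmeanE p π L) ≤ gap π (pmeanE q π L) := by
  obtain ⟨hπpos, hπsum⟩ := hπ
  have hdualpos : ∀ {x y : X}, x ≠ y → 0 < dual π L x y :=
    fun h => dual_pos hπpos hLpos h
  have part1 : ∀ x y, x ≠ y → pmeanE p π L x y ≤ pmeanE q π L x y := by
    intro x y hxy
    rw [pmeanE_off p π L hxy, pmeanE_off q π L hxy]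
    exact pm_le (hLpos x y hxy) (hdualpos hxy) hpq
  have part3 : ∀ f : X → ℝ, quadForm π (pmeanE p π L) f ≤ quadForm π (pmeanE q π L) f := by
    intro f
    have hsym : ∀ x y, π x * (pmeanE q π L x y - pmeanE p π L x y)
        = π y * (pmeanE q π L y x - pmeanE p π L y x) := by
      intro x y
      rw [mul_sub, mul_sub, pmean_sym hπpos hLpos q x y, pmean_sym hπpos hLpos p x y]
    have hd := quad_diff π (pmeanE q π L) (pmeanE p π L)
      (pmeanE_rowsum q π L) (pmeanE_rowsum p π L) hsym f
    have hnn : 0 ≤ ∑ x, ∑ y,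
        (π x * (pmeanE q π L x y - pmeanE p π L x y)) * (f x - f y)^2 := by
      refine Finset.sum_nonneg fun x _ => Finset.sum_nonneg fun y _ => ?_
      rcases eq_or_ne x y with rfl | hxy
      · simp
      · have h1 : 0 ≤ π x * (pmeanE q π L x y - pmeanE p π L x y) := by
          have h2 := part1 x y hxy
          have h3 := (hπpos x).le
          nlinarith
        exact mul_nonneg h1 (sq_nonneg _)
    linarith
  have part2 : (∀ x y, x ≠ y → pmeanE p π L x y = pmeanE q π L x y) ↔ IsRev π L := by
    constructor
    · intro h
      refine ⟨hL, fun x y => ?_⟩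
      rcases eq_or_ne x y with rfl | hxy
      · rfl
      · have heq := h x y hxy
        rw [pmeanE_off p π L hxy, pmeanE_off q π L hxy] at heq
        have hab : L x y = dual π L x y := by
          by_contra hne
          exact absurd heq (ne_of_lt (pm_strict (hLpos x y hxy) (hdualpos hxy) hne hpq))
        rw [dual_off π L hxy] at hab
        have hx := (hπpos x).ne'
        field_simp at hab
        linarith
    · intro hrev x y hxy
      have hd : dual π L x y = L x y := by
        rw [dual_off π L hxy, ← hrev.2 x y, mul_comm,
          mul_div_assoc, div_self (hπpos x).ne', mul_one]
      rw [pmeanE_off p π L hxy, pmeanE_off q π L hxy, hd,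
        pm_self (hLpos x y hxy), pm_self (hLpos x y hxy)]
  refine ⟨part1, part2, part3, ?_⟩
  obtain ⟨x0, x1, hx01⟩ := Fintype.exists_pair_of_one_lt_card hcard
  set s : ℝ := π x0 with hs
  have hs0 : 0 < s := hπpos x0
  have hs1 : s < 1 := by
    have hx1mem : x1 ∈ Finset.univ.erase x0 :=
      Finset.mem_erase.mpr ⟨hx01.symm, Finset.mem_univ _⟩
    have h1 : π x1 ≤ ∑ z ∈ Finset.univ.erase x0, π z :=
      Finset.single_le_sum (fun i _ => (hπpos i).le) hx1mem
    have h2 : s + ∑ z ∈ Finset.univ.erase x0, π z = 1 := by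
      rw [hs, Finset.add_sum_erase _ _ (Finset.mem_univ x0), hπsum]
    have h3 := hπpos x1
    linarith
  have h1s : 0 < 1 - s := by linarith
  have hsq_s : 0 < Real.sqrt s := Real.sqrt_pos.mpr hs0
  have hsq_1s : 0 < Real.sqrt (1 - s) := Real.sqrt_pos.mpr h1s
  have hss : Real.sqrt s * Real.sqrt s = s := Real.mul_self_sqrt hs0.le
  have h1ss : Real.sqrt (1 - s) * Real.sqrt (1 - s) = 1 - s := Real.mul_self_sqrt h1s.le
  set c : ℝ := Real.sqrt (1 - s) / Real.sqrt s with hc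
  set d : ℝ := -(Real.sqrt s / Real.sqrt (1 - s)) with hd
  set f0 : X → ℝ := fun x => if x = x0 then c else d with hf0
  have hsum1 : ∑ x, π x * f0 x = 0 := by
    have e : ∀ x, π x * f0 x = π x * d + (if x = x0 then π x * (c - d) else 0) := by
      intro x
      rw [hf0]
      dsimp only
      split_ifs <;> ring
    rw [Finset.sum_congr rfl (fun x _ => e x), Finset.sum_add_distrib,
      ← Finset.sum_mul, hπsum, Fintype.sum_ite_eq' x0 (fun x => π x * (c - d))]
    have e1 : s * c = Real.sqrt s * Real.sqrt (1 - s) := by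
      rw [hc, mul_div_assoc', div_eq_iff hsq_s.ne']
      nlinarith [hss]
    have e2 : (1 - s) * d = -(Real.sqrt s * Real.sqrt (1 - s)) := by
      rw [hd, mul_neg, mul_div_assoc', neg_eq_iff_eq_neg, neg_neg, div_eq_iff hsq_1s.ne']
      nlinarith [h1ss]
    linear_combination e1 + e2
  have hsum2 : ∑ x, π x * f0 x ^ 2 = 1 := by
    have e : ∀ x, π x * f0 x ^ 2 = π x * d^2 + (if x = x0 then π x * (c^2 - d^2) else 0) := by
      intro x
      rw [hf0]
      dsimp only
      split_ifs <;> ring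
    rw [Finset.sum_congr rfl (fun x _ => e x), Finset.sum_add_distrib,
      ← Finset.sum_mul, hπsum, Fintype.sum_ite_eq' x0 (fun x => π x * (c^2 - d^2))]
    have ec : c^2 = (1 - s)/s := by
      rw [hc, div_pow, Real.sq_sqrt hs0.le, Real.sq_sqrt h1s.le]
    have ed : d^2 = s/(1 - s) := by
      rw [hd, neg_sq, div_pow, Real.sq_sqrt hs0.le, Real.sq_sqrt h1s.le]
    rw [ec, ed]
    field_simp
    ring
  have hSqne : {r : ℝ | ∃ f : X → ℝ,
      (∑ x, π x * f x = 0) ∧ (∑ x, π x * f x ^ 2 = 1) ∧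
      r = quadForm π (pmeanE q π L) f}.Nonempty :=
    ⟨quadForm π (pmeanE q π L) f0, f0, hsum1, hsum2, rfl⟩
  set Mp := pmeanE p π L with hMp
  set C : ℝ := ∑ x, ∑ y, |π x * Mp x y| * (Real.sqrt (π y)⁻¹ * Real.sqrt (π x)⁻¹) with hCdef
  have hbdd : ∀ g : X → ℝ, (∑ x, π x * g x ^ 2 = 1) → -C ≤ quadForm π Mp g := by
    intro g hg
    have hgb : ∀ z, |g z| ≤ Real.sqrt (π z)⁻¹ := by
      intro z
      have h1 : π z * g z ^ 2 ≤ 1 := by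
        rw [← hg]
        exact Finset.single_le_sum (f := fun x => π x * g x ^ 2)
          (fun i _ => mul_nonneg (hπpos i).le (sq_nonneg _)) (Finset.mem_univ z)
      have h2 : g z ^ 2 ≤ (π z)⁻¹ := by
        rw [← one_div]
        rw [le_div_iff₀ (hπpos z)]
        linarith [h1, mul_comm (π z) (g z ^ 2)]
      calc |g z| = Real.sqrt (g z ^ 2) := (Real.sqrt_sq_eq_abs _).symm
        _ ≤ Real.sqrt (π z)⁻¹ := Real.sqrt_le_sqrt h2
    rw [quadForm_eq]
    calc -C = ∑ x, ∑ y, -(|π x * Mp x y| * (Real.sqrt (π y)⁻¹ * Real.sqrt (π x)⁻¹)) := by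
          rw [hCdef, ← Finset.sum_neg_distrib]
          refine Finset.sum_congr rfl fun x _ => ?_
          rw [← Finset.sum_neg_distrib]
      _ ≤ ∑ x, ∑ y, -(π x * Mp x y * g y * g x) := by
          refine Finset.sum_le_sum fun x _ => Finset.sum_le_sum fun y _ => ?_
          apply neg_le_neg
          calc π x * Mp x y * g y * g x ≤ |π x * Mp x y * g y * g x| := le_abs_self _
            _ = |π x * Mp x y| * (|g y| * |g x|) := by
                rw [abs_mul, abs_mul]; ring
            _ ≤ |π x * Mp x y| * (Real.sqrt (π y)⁻¹ * Real.sqrt (π x)⁻¹) := by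
                refine mul_le_mul_of_nonneg_left ?_ (abs_nonneg _)
                exact mul_le_mul (hgb y) (hgb x) (abs_nonneg _) (Real.sqrt_nonneg _)
  have hSpbdd : BddBelow {r : ℝ | ∃ f : X → ℝ,
      (∑ x, π x * f x = 0) ∧ (∑ x, π x * f x ^ 2 = 1) ∧
      r = quadForm π Mp f} := by
    refine ⟨-C, fun r hr => ?_⟩
    obtain ⟨g, _, hg2, rfl⟩ := hr
    exact hbdd g hg2
  simp only [gap, hMp]
  refine le_csInf hSqne ?_
  rintro r ⟨g, hg1, hg2, rfl⟩
  calc sInf {r : ℝ | ∃ f : X → ℝ,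
        (∑ x, π x * f x = 0) ∧ (∑ x, π x * f x ^ 2 = 1) ∧
        r = quadForm π Mp f} ≤ quadForm π Mp g := csInf_le hSpbdd ⟨g, hg1, hg2, rfl⟩
    _ ≤ quadForm π (pmeanE q π L) g := part3 g

end
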